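/- Let Γ = {X ∈ M_{m,n} : σ(X) ∈ Δ} be an orthogonally invariant matrix set with Δ ⊂ ℝⁿ absolutely symmetric, let X ∈ Γ and H ∈ T_Γ(X). Then the second-order tangent set satisfies T²_Γ(X,H) = {W ∈ M_{m,n} : σ''(X;H,W) ∈ T²_Δ(σ(X), σ'(X;H))}. Moreover, if Δ is parabolically derivable at σ(X) for σ'(X;H), then Γ is parabolically derivable at X for H. -/

import Mathlib

open Filter Topology Matrix

noncomputable section

abbrev Mat (m n : ℕ) := Matrix (Fin m) (Fin n) ℝ

namespace Paper

/-- Frobenius (trace) inner product on real matrices. -/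
def finner {m n : ℕ} (X Y : Mat m n) : ℝ := ∑ i, ∑ j, X i j * Y i j

/-- Frobenius norm. -/
def fnorm {m n : ℕ} (X : Mat m n) : ℝ := Real.sqrt (finner X X)

/-- Euclidean inner product on `ℝⁿ`. -/
def vinner {n : ℕ} (x y : Fin n → ℝ) : ℝ := ∑ i, x i * y i

/-- Euclidean norm on `ℝⁿ`. -/
def vnorm {n : ℕ} (x : Fin n → ℝ) : ℝ := Real.sqrt (vinner x x)

/-- Eigenvalues of a real symmetric matrix, arranged in nonincreasing order. -/
def eigs {k : ℕ} (A : Matrix (Fin k) (Fin k) ℝ) (hA : A.IsHermitian) : Fin k → ℝ :=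
  fun i => hA.eigenvalues (Tuple.sort (fun j => -(hA.eigenvalues j)) i)

/-- Singular values of a real `m × n` matrix, arranged in nonincreasing order. -/
def svals {m n : ℕ} (X : Mat m n) : Fin n → ℝ :=
  fun i => Real.sqrt (eigs _ (by simpa [Matrix.conjTranspose_eq_transpose_of_trivial] using
    Matrix.isHermitian_conjTranspose_mul_self X : (Xᵀ * X).IsHermitian) i)

/-- The `m × n` matrix with `x` on the diagonal and zeros elsewhere. -/
def mdiag {m n : ℕ} (x : Fin n → ℝ) : Mat m n :=
  fun i j => if (i : ℕ) = (j : ℕ) then x j else 0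

/-- The symmetric block matrix `B(X) = [[0, X], [Xᵀ, 0]]`, reindexed over `Fin (m+n)`. -/
def bmat {m n : ℕ} (X : Mat m n) : Matrix (Fin (m + n)) (Fin (m + n)) ℝ :=
  Matrix.reindex finSumFinEquiv finSumFinEquiv (Matrix.fromBlocks 0 X Xᵀ 0)

lemma bmat_isHermitian {m n : ℕ} (X : Mat m n) : (bmat X).IsHermitian := by
  rw [Matrix.IsHermitian]
  ext i j
  simp only [bmat, Matrix.conjTranspose_apply, Matrix.reindex_apply, Matrix.submatrix_apply,
    star_trivial]
  rcases hi : finSumFinEquiv.symm i with a | a <;> rcases hj : finSumFinEquiv.symm j with b | b <;>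
    simp [Matrix.fromBlocks, Matrix.transpose_apply]

/-- Eigenvalues of `B(X)` in nonincreasing order. -/
def beigs {m n : ℕ} (X : Mat m n) : Fin (m + n) → ℝ :=
  eigs (bmat X) (bmat_isHermitian X)

/-- `Q` is a signed permutation matrix. -/
def IsSignedPerm {n : ℕ} (Q : Matrix (Fin n) (Fin n) ℝ) : Prop :=
  ∃ (e : Equiv.Perm (Fin n)) (s : Fin n → ℝ), (∀ i, s i = 1 ∨ s i = -1) ∧
    ∀ i j, Q i j = if j = e i then s i else 0

/-- A set of vectors invariant under all signed permutations. -/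
def AbsSymSet {n : ℕ} (K : Set (Fin n → ℝ)) : Prop :=
  ∀ Q, IsSignedPerm Q → ∀ x ∈ K, Q.mulVec x ∈ K

/-- An extended-real-valued absolutely symmetric function. -/
def AbsSymFun {n : ℕ} (f : (Fin n → ℝ) → EReal) : Prop :=
  ∀ Q, IsSignedPerm Q → ∀ x, f (Q.mulVec x) = f x

/-- Euclidean distance from a point to a set in `ℝⁿ`. -/
def vdist {n : ℕ} (x : Fin n → ℝ) (K : Set (Fin n → ℝ)) : ℝ :=
  sInf ((fun y => vnorm (x - y)) '' K)

/-- Frobenius distance from a matrix to a set of matrices. -/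
def mdist {m n : ℕ} (X : Mat m n) (Γ : Set (Mat m n)) : ℝ :=
  sInf ((fun Y => fnorm (X - Y)) '' Γ)

section Variational

variable {E : Type*} [AddCommGroup E] [Module ℝ E] [TopologicalSpace E]

/-- The subderivative `dg(x)(w) = liminf_{t↓0, w'→w} (g(x+tw') - g(x))/t`. -/
def subderiv (g : E → EReal) (x w : E) : EReal :=
  liminf (fun p : ℝ × E => ((p.1⁻¹ : ℝ) : EReal) * (g (x + p.1 • p.2) - g x))
    ((𝓝[>] (0 : ℝ)) ×ˢ 𝓝 w)

/-- The second-order difference quotient `Δ²_τ g(x | v)(w)`. -/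
def secondQuot (ip : E → E → ℝ) (g : E → EReal) (x v : E) (τ : ℝ) (w : E) : EReal :=
  ((2 / τ ^ 2 : ℝ) : EReal) * (g (x + τ • w) - g x - ((τ * ip v w : ℝ) : EReal))

/-- The second subderivative `d²g(x | v)(w)`. -/
def secondSubderiv (ip : E → E → ℝ) (g : E → EReal) (x v w : E) : EReal :=
  liminf (fun p : ℝ × E => secondQuot ip g x v p.1 p.2) ((𝓝[>] (0 : ℝ)) ×ˢ 𝓝 w)

/-- The parabolic difference quotient `Δ²_τ g(x)(w | z)`. -/
def parabQuot (g : E → EReal) (x w : E) (τ : ℝ) (z : E) : EReal :=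
  ((2 / τ ^ 2 : ℝ) : EReal) *
    (g (x + τ • w + (τ ^ 2 / 2) • z) - g x - ((τ : ℝ) : EReal) * subderiv g x w)

/-- The parabolic subderivative `d²g(x)(w | z)`. -/
def parabolicSubderiv (g : E → EReal) (x w z : E) : EReal :=
  liminf (fun p : ℝ × E => parabQuot g x w p.1 p.2) ((𝓝[>] (0 : ℝ)) ×ˢ 𝓝 z)

/-- Parabolic epi-differentiability of `g` at `x` for `w`. -/
def ParabEpiDiffAt (g : E → EReal) (x w : E) : Prop :=
  (∃ z, parabolicSubderiv g x w z < ⊤) ∧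
  ∀ z : E, ∀ t : ℕ → ℝ, (∀ k, 0 < t k) → Tendsto t atTop (𝓝 0) →
    ∃ zk : ℕ → E, Tendsto zk atTop (𝓝 z) ∧
      Tendsto (fun k => parabQuot g x w (t k) (zk k)) atTop (𝓝 (parabolicSubderiv g x w z))

/-- The (contingent) tangent cone to `C` at `x`. -/
def tangentConeOf (C : Set E) (x : E) : Set E :=
  {w | ∃ t : ℕ → ℝ, ∃ w' : ℕ → E, (∀ k, 0 < t k) ∧ Tendsto t atTop (𝓝 0) ∧
    Tendsto w' atTop (𝓝 w) ∧ ∀ k, x + t k • w' k ∈ C}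

/-- The second-order tangent set to `C` at `x` for `w`. -/
def tangentCone2Of (C : Set E) (x w : E) : Set E :=
  {u | ∃ t : ℕ → ℝ, ∃ u' : ℕ → E, (∀ k, 0 < t k) ∧ Tendsto t atTop (𝓝 0) ∧
    Tendsto u' atTop (𝓝 u) ∧ ∀ k, x + t k • w + (t k ^ 2 / 2) • u' k ∈ C}

/-- Parabolic derivability of the set `C` at `x` for `w`. -/
def ParabolicallyDerivable (C : Set E) (x w : E) : Prop :=
  (tangentCone2Of C x w).Nonempty ∧
  ∀ u ∈ tangentCone2Of C x w, ∃ ε > (0 : ℝ), ∃ ξ : ℝ → E,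
    (∀ t ∈ Set.Icc (0 : ℝ) ε, ξ t ∈ C) ∧ ξ 0 = x ∧
    Tendsto (fun t : ℝ => t⁻¹ • (ξ t - x)) (𝓝[>] 0) (𝓝 w) ∧
    Tendsto (fun t : ℝ => (2 / t ^ 2) • (ξ t - x - t • w)) (𝓝[>] 0) (𝓝 u)

/-- The convex subdifferential of `g` at `x` (w.r.t. the pairing `ip`). -/
def convSubdiff (ip : E → E → ℝ) (g : E → EReal) (x : E) : Set E :=
  {v | ∀ y, ((ip v (y - x) : ℝ) : EReal) + g x ≤ g y}

/-- Convexity for extended-real-valued functions. -/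
def ConvexEReal (g : E → EReal) : Prop :=
  ∀ x y : E, ∀ t : ℝ, 0 ≤ t → t ≤ 1 →
    g (t • x + (1 - t) • y) ≤ ((t : ℝ) : EReal) * g x + ((1 - t : ℝ) : EReal) * g y

end Variational

/-- Local Lipschitz continuity of `f` relative to its domain (everywhere on the domain). -/
def LocLipRelDom {n : ℕ} (f : (Fin n → ℝ) → EReal) : Prop :=
  ∀ x, f x ≠ ⊤ → ∃ l ≥ (0 : ℝ), ∃ U ∈ 𝓝 x, ∀ y ∈ U, ∀ z ∈ U, f y ≠ ⊤ → f z ≠ ⊤ →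
    |(f y).toReal - (f z).toReal| ≤ l * vnorm (y - z)

/-- The columns of `U` with indices `r, r+1, …, k-1`. -/
def colsFrom {k : ℕ} (r : ℕ) (U : Matrix (Fin k) (Fin k) ℝ) :
    Matrix (Fin k) (Fin (k - r)) ℝ :=
  fun i j => U i ⟨r + (j : ℕ), by have := j.isLt; omega⟩

/-- The first `r` columns of `U`. -/
def firstCols {k : ℕ} (r : ℕ) (h : r ≤ k) (U : Matrix (Fin k) (Fin k) ℝ) :
    Matrix (Fin k) (Fin r) ℝ :=
  fun i j => U i (Fin.castLE h j)

/-- The submatrix of `M` with rows `a ≤ · < b` and columns `c ≤ · < d`. -/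
def subBlock {p q : ℕ} (M : Matrix (Fin p) (Fin q) ℝ) (a b c d : ℕ)
    (h1 : b ≤ p) (h2 : d ≤ q) : Matrix (Fin (b - a)) (Fin (d - c)) ℝ :=
  fun i j => M ⟨a + (i : ℕ), by have := i.isLt; omega⟩ ⟨c + (j : ℕ), by have := j.isLt; omega⟩

/-- Nuclear norm: the sum of all singular values. -/
def nucNorm {m n : ℕ} (A : Mat m n) : ℝ := ∑ j, svals A j

/-- `Ψₙ(X) = σ_{r+1}(X) + ⋯ + σ_n(X)`, the sum of the `n - r` smallest singular values. -/
def psiN {m n : ℕ} (r : ℕ) (X : Mat m n) : ℝ :=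
  ∑ s : Fin n, if r ≤ (s : ℕ) then svals X s else 0

/-- The regular (Fréchet) subdifferential of a real-valued function on matrices. -/
def regSubdiff {m n : ℕ} (g : Mat m n → ℝ) (X : Mat m n) : Set (Mat m n) :=
  {V | ∀ ε > (0 : ℝ), ∀ᶠ Y in 𝓝 X, g X + finner V (Y - X) - ε * fnorm (Y - X) ≤ g Y}

/-- Two square matrices admit a simultaneous ordered spectral decomposition. -/
def SimSpec {k : ℕ} (A B : Matrix (Fin k) (Fin k) ℝ) : Prop :=
  ∃ (W : Matrix (Fin k) (Fin k) ℝ) (a b : Fin k → ℝ), Wᵀ * W = 1 ∧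
    Antitone a ∧ Antitone b ∧
    A = W * Matrix.diagonal a * Wᵀ ∧ B = W * Matrix.diagonal b * Wᵀ

/-- Two rectangular matrices admit a simultaneous ordered singular value decomposition. -/
def SimSVD {p q : ℕ} (A B : Matrix (Fin p) (Fin q) ℝ) : Prop :=
  ∃ (U : Matrix (Fin p) (Fin p) ℝ) (V : Matrix (Fin q) (Fin q) ℝ)
    (a b : Fin q → ℝ), Uᵀ * U = 1 ∧ Vᵀ * V = 1 ∧
    Antitone a ∧ Antitone b ∧ (∀ j, 0 ≤ a j) ∧ (∀ j, 0 ≤ b j) ∧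
    A = U * mdiag (m := p) a * Vᵀ ∧ B = U * mdiag (m := p) b * Vᵀ

end Paper

open Paper

/-!
Two facts about the singular value map `σ` carry second-order tangent information between
`Δ` and `Γ = σ⁻¹(Δ)`. First, `σ` is `1`-Lipschitz for the Frobenius norm (Weyl's inequality,
via Courant–Fischer), so the second-order difference quotients of `σ` along points of `Γ` stay
as close to those along `X + tH + t²/2 W` as the matrix quotients are to `W`; this gives
`T²_Γ(X,H) ⊆ {W | σ''(X;H,W) ∈ T²_Δ(σ(X), σ'(X;H))}`. Second, if `A = U diag(σ(A)) Vᵀ` is an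
ordered SVD and `y` any vector, then `B = U diag(y) Vᵀ` has `σ(B)` equal to `|y|` sorted, a
signed permutation of `y` (so `σ(B) ∈ Δ` when `y ∈ Δ`), and `‖B - A‖ = ‖diag(y - σ(A))‖`.
Lifting sequences and arcs of `Δ` this way gives the reverse inclusion and parabolic
derivability; nonemptiness of `T²_Γ(X,H)` follows by compactness, the lifted quotients
being bounded.
-/

lemma Submodule.exists_mem_inf_ne_zero_of_finrank_lt_add {K V : Type*} [DivisionRing K]
    [AddCommGroup V] [Module K V] [FiniteDimensional K V] (s t : Submodule K V)
    (h : Module.finrank K V < Module.finrank K s + Module.finrank K t) :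
    ∃ x ∈ s ⊓ t, x ≠ 0 := by
  by_contra! hst
  have hbot : s ⊓ t = ⊥ := (Submodule.eq_bot_iff _).mpr hst
  have := Submodule.finrank_sup_add_finrank_inf_eq s t
  rw [hbot, finrank_bot] at this
  have := (s ⊔ t).finrank_le
  omega

namespace Paper

section Sorting

variable {k : ℕ}

def sortDesc (d : Fin k → ℝ) : Fin k → ℝ :=
  fun i => d (Tuple.sort (fun j => -(d j)) i)

lemma sortDesc_antitone (d : Fin k → ℝ) : Antitone (sortDesc d) := fun _ _ hij => by
  simpa [sortDesc] using Tuple.monotone_sort (fun j => -(d j)) hij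

lemma map_sortDesc (d : Fin k → ℝ) :
    Finset.univ.val.map (sortDesc d) = Finset.univ.val.map d := by
  rw [show sortDesc d = d ∘ Tuple.sort (fun j => -(d j)) from rfl, ← Multiset.map_map,
    Multiset.map_univ_val_equiv]

lemma eq_of_antitone_of_map_eq {f g : Fin k → ℝ} (hf : Antitone f) (hg : Antitone g)
    (h : Finset.univ.val.map f = Finset.univ.val.map g) : f = g := by
  rw [Fin.univ_val_map, Fin.univ_val_map, Multiset.coe_eq_coe] at h
  refine List.ofFn_inj.mp (h.eq_of_pairwise (fun _ _ _ _ => ge_antisymm) ?_ ?_)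
  · exact List.pairwise_ofFn.mpr fun _ _ hij => hf hij.le
  · exact List.pairwise_ofFn.mpr fun _ _ hij => hg hij.le

end Sorting

lemma eigs_eq_sortDesc_of_eq_conj_diagonal {k : ℕ} {A P : Matrix (Fin k) (Fin k) ℝ}
    {d : Fin k → ℝ} (hA : A.IsHermitian) (hP : Pᵀ * P = 1) (h : A = P * diagonal d * Pᵀ) :
    eigs A hA = sortDesc d := by
  refine eq_of_antitone_of_map_eq (sortDesc_antitone _) (sortDesc_antitone _) ?_
  have hchar : A.charpoly = (diagonal d).charpoly := by
    rw [h, Matrix.mul_assoc, charpoly_mul_comm, Matrix.mul_assoc, hP, Matrix.mul_one]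
  have hroots := hA.roots_charpoly_eq_eigenvalues
  have hd := Polynomial.roots_multiset_prod_X_sub_C (Finset.univ.val.map d)
  rw [Multiset.map_map, ← Finset.prod_eq_multiset_prod] at hd
  rw [Function.comp_def, ← charpoly_diagonal, ← hchar, hroots] at hd
  change Finset.univ.val.map (sortDesc hA.eigenvalues) = _
  rw [map_sortDesc, map_sortDesc, ← hd]
  rfl

lemma isHermitian_transpose_mul_self {m n : ℕ} (X : Mat m n) : (Xᵀ * X).IsHermitian := by
  simpa [Matrix.conjTranspose_eq_transpose_of_trivial] using
    Matrix.isHermitian_conjTranspose_mul_self X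

lemma svals_eq_sqrt_eigs {m n : ℕ} (X : Mat m n) :
    svals X = fun i => √(eigs _ (isHermitian_transpose_mul_self X) i) := rfl

lemma transpose_mdiag_mul_mdiag {m n : ℕ} (hmn : n ≤ m) (y : Fin n → ℝ) :
    (mdiag y : Mat m n)ᵀ * (mdiag y : Mat m n) = diagonal (fun j => y j ^ 2) := by
  ext j j'
  rw [Matrix.mul_apply, Finset.sum_eq_single (Fin.castLE hmn j)]
  · by_cases h : j = j' <;> simp [mdiag, h, sq, Fin.val_eq_val]
  · intro i _ hi
    have : (i : ℕ) ≠ j := fun h => hi (Fin.ext h)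
    simp [mdiag, this]
  · simp

lemma svals_orthogonal_conj_mdiag {m n : ℕ} (hmn : n ≤ m) {U : Matrix (Fin m) (Fin m) ℝ}
    {V : Matrix (Fin n) (Fin n) ℝ} (hU : Uᵀ * U = 1) (hV : Vᵀ * V = 1) (y : Fin n → ℝ) :
    svals (U * (mdiag y : Mat m n) * Vᵀ) = sortDesc (fun i => |y i|) := by
  have hgram : (U * (mdiag y : Mat m n) * Vᵀ)ᵀ * (U * (mdiag y : Mat m n) * Vᵀ) =
      V * diagonal (fun j => y j ^ 2) * Vᵀ := by
    simp only [Matrix.transpose_mul, Matrix.transpose_transpose, Matrix.mul_assoc]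
    rw [← Matrix.mul_assoc Uᵀ, hU, Matrix.one_mul, ← Matrix.mul_assoc (mdiag y : Mat m n)ᵀ,
      transpose_mdiag_mul_mdiag hmn]
  rw [svals_eq_sqrt_eigs, eigs_eq_sortDesc_of_eq_conj_diagonal _ hV hgram]
  refine eq_of_antitone_of_map_eq (fun i j hij => Real.sqrt_le_sqrt (sortDesc_antitone _ hij))
    (sortDesc_antitone _) ?_
  rw [map_sortDesc]
  have h := congrArg (Multiset.map Real.sqrt) (map_sortDesc fun j => y j ^ 2)
  simp only [Multiset.map_map, Function.comp_def] at h
  rw [h]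
  congr 1
  funext i
  exact Real.sqrt_sq_eq_abs (y i)

lemma AbsSymSet.sortDesc_abs_mem {n : ℕ} {Δ : Set (Fin n → ℝ)} (hΔ : AbsSymSet Δ)
    {y : Fin n → ℝ} (hy : y ∈ Δ) : sortDesc (fun i => |y i|) ∈ Δ := by
  set e := Tuple.sort (fun j => -|y j|)
  set sg : Fin n → ℝ := fun i => if y (e i) < 0 then -1 else 1
  have hsg : ∀ i, sg i = 1 ∨ sg i = -1 := fun i => by by_cases h : y (e i) < 0 <;> simp [sg, h]
  convert hΔ (Matrix.of fun i j => if j = e i then sg i else 0) ⟨e, sg, hsg, fun _ _ => rfl⟩ y hy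
  ext i
  simp only [Matrix.mulVec, dotProduct, Matrix.of_apply, ite_mul, zero_mul,
    Finset.sum_ite_eq', Finset.mem_univ, if_true]
  by_cases h : y (e i) < 0
  · simp [sortDesc, sg, e, h, abs_of_neg h]
  · simp [sortDesc, sg, e, h, abs_of_nonneg (not_lt.mp h)]

section SingularValueDecomposition

variable {m n : ℕ}

lemma svals_sq (X : Mat m n) (j : Fin n) :
    svals X j ^ 2 = eigs _ (isHermitian_transpose_mul_self X) j := by
  have hpsd : (Xᵀ * X).PosSemidef := by
    simpa [Matrix.conjTranspose_eq_transpose_of_trivial] using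
      Matrix.posSemidef_conjTranspose_mul_self X
  exact Real.sq_sqrt (hpsd.eigenvalues_nonneg _)

lemma svals_nonneg (X : Mat m n) (j : Fin n) : 0 ≤ svals X j := Real.sqrt_nonneg _

lemma svals_antitone (X : Mat m n) : Antitone (svals X) :=
  fun _ _ hij => Real.sqrt_le_sqrt (sortDesc_antitone _ hij)

/-- Orthonormal eigenvectors of `Xᵀ * X`, listed in the order of `svals X`. -/
def rightSingularBasis (X : Mat m n) : OrthonormalBasis (Fin n) ℝ (EuclideanSpace ℝ (Fin n)) :=
  (isHermitian_transpose_mul_self X).eigenvectorBasis.reindex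
    (Tuple.sort fun j => -((isHermitian_transpose_mul_self X).eigenvalues j)).symm

lemma transpose_mul_self_mulVec_rightSingularBasis (X : Mat m n) (j : Fin n) :
    (Xᵀ * X) *ᵥ rightSingularBasis X j = svals X j ^ 2 • rightSingularBasis X j := by
  rw [svals_sq, rightSingularBasis, OrthonormalBasis.reindex_apply, Equiv.symm_symm]
  exact (isHermitian_transpose_mul_self X).mulVec_eigenvectorBasis _

lemma mulVec_dotProduct_mulVec_rightSingularBasis (X : Mat m n) (i j : Fin n) :
    X *ᵥ rightSingularBasis X i ⬝ᵥ X *ᵥ rightSingularBasis X j =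
      if i = j then svals X j ^ 2 else 0 := by
  rw [Matrix.dotProduct_mulVec, Matrix.vecMul_mulVec, ← Matrix.dotProduct_mulVec,
    transpose_mul_self_mulVec_rightSingularBasis, dotProduct_smul]
  have h := orthonormal_iff_ite.mp (rightSingularBasis X).orthonormal j i
  rw [EuclideanSpace.inner_eq_star_dotProduct, star_trivial] at h
  rw [h]
  by_cases hij : i = j
  · simp [hij]
  · simp [hij, Ne.symm hij]

lemma orthonormal_leftSingular (X : Mat m n) :
    Orthonormal ℝ fun j : {j // svals X j ≠ 0} =>
      WithLp.toLp 2 ((svals X j)⁻¹ • (X *ᵥ rightSingularBasis X j)) := by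
  rw [orthonormal_iff_ite]
  rintro ⟨i, hi⟩ ⟨j, hj⟩
  rw [EuclideanSpace.inner_eq_star_dotProduct, star_trivial]
  simp only [smul_dotProduct, dotProduct_smul,
    mulVec_dotProduct_mulVec_rightSingularBasis, Subtype.mk.injEq, smul_eq_mul]
  by_cases hij : i = j
  · subst hij
    field_simp
    simp
  · simp [hij, Ne.symm hij]

lemma transpose_toMatrix_orthonormalBasis_mul_self {k : ℕ}
    (b : OrthonormalBasis (Fin k) ℝ (EuclideanSpace ℝ (Fin k))) :
    ((EuclideanSpace.basisFun (Fin k) ℝ).toBasis.toMatrix b)ᵀ *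
      (EuclideanSpace.basisFun (Fin k) ℝ).toBasis.toMatrix b = 1 := by
  have h := (EuclideanSpace.basisFun (Fin k) ℝ).toMatrix_orthonormalBasis_mem_unitary b
  rwa [Matrix.mem_unitaryGroup_iff', Matrix.star_eq_conjTranspose,
    Matrix.conjTranspose_eq_transpose_of_trivial] at h

lemma mul_toMatrix_orthonormalBasis_apply {p k : ℕ} (A : Matrix (Fin p) (Fin k) ℝ)
    (b : OrthonormalBasis (Fin k) ℝ (EuclideanSpace ℝ (Fin k))) (i : Fin p) (j : Fin k) :
    (A * (EuclideanSpace.basisFun (Fin k) ℝ).toBasis.toMatrix b) i j = (A *ᵥ b j) i := by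
  simp [Matrix.mul_apply, Matrix.mulVec, dotProduct, Module.Basis.toMatrix_apply]

lemma mul_mdiag_apply (hmn : n ≤ m) {p : ℕ} (U : Matrix (Fin p) (Fin m) ℝ) (y : Fin n → ℝ)
    (i : Fin p) (j : Fin n) : (U * (mdiag y : Mat m n)) i j = U i (Fin.castLE hmn j) * y j := by
  rw [Matrix.mul_apply, Finset.sum_eq_single (Fin.castLE hmn j)]
  · simp [mdiag]
  · intro l _ hl
    have : (l : ℕ) ≠ j := fun h => hl (Fin.ext h)
    simp [mdiag, this]
  · simp

theorem exists_svd (hmn : n ≤ m) (A : Mat m n) :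
    ∃ (U : Matrix (Fin m) (Fin m) ℝ) (V : Matrix (Fin n) (Fin n) ℝ),
      Uᵀ * U = 1 ∧ Vᵀ * V = 1 ∧ A = U * (mdiag (svals A) : Mat m n) * Vᵀ := by
  -- Extend the left singular vectors `σⱼ⁻¹ • A wⱼ` (`σⱼ ≠ 0`), placed at the indices
  -- `castLE j`, to an orthonormal basis of `ℝᵐ`.
  set w := rightSingularBasis A
  set u := fun j : {j // svals A j ≠ 0} => WithLp.toLp 2 ((svals A j)⁻¹ • (A *ᵥ w j))
  set f : {j // svals A j ≠ 0} → Fin m := fun j => Fin.castLE hmn j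
  have hf : f.Injective := fun i j h => Subtype.ext (Fin.castLE_injective hmn h)
  have hon : Orthonormal ℝ ((Set.range f).domRestrict (Function.extend f u 0)) := by
    convert (orthonormal_leftSingular A).comp _ (Equiv.ofInjective f hf).symm.injective
    ext ⟨_, j, rfl⟩ : 1
    simp only [Function.comp_apply, Equiv.ofInjective_symm_apply]
    exact hf.extend_apply u 0 j
  obtain ⟨b, hb⟩ := hon.exists_orthonormalBasis_extension_of_card_eq (by simp)
  set U := (EuclideanSpace.basisFun (Fin m) ℝ).toBasis.toMatrix b
  set V := (EuclideanSpace.basisFun (Fin n) ℝ).toBasis.toMatrix w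
  have hV : Vᵀ * V = 1 := transpose_toMatrix_orthonormalBasis_mul_self w
  have hcol : A * V = U * (mdiag (svals A) : Mat m n) := by
    ext i j
    rw [mul_toMatrix_orthonormalBasis_apply, mul_mdiag_apply hmn]
    by_cases hσ : svals A j = 0
    · have hAw : A *ᵥ w j = 0 := by
        rw [← dotProduct_self_eq_zero, mulVec_dotProduct_mulVec_rightSingularBasis]
        simp [hσ]
      simp [hAw, hσ]
    · have hbj : b (Fin.castLE hmn j) = u ⟨j, hσ⟩ := by
        rw [hb _ ⟨⟨j, hσ⟩, rfl⟩]
        exact hf.extend_apply u 0 ⟨j, hσ⟩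
      simp [U, Module.Basis.toMatrix_apply, hbj, u]
      field_simp
  refine ⟨U, V, transpose_toMatrix_orthonormalBasis_mul_self b, hV, ?_⟩
  rw [← hcol, Matrix.mul_assoc, mul_eq_one_comm.mp hV, Matrix.mul_one]

lemma norm_mulVec_sq_of_mem_span (A : Mat m n) (I : Finset (Fin n))
    {x : EuclideanSpace ℝ (Fin n)}
    (hx : x ∈ Submodule.span ℝ (Set.range fun i : I => rightSingularBasis A i)) :
    ∃ c : I → ℝ, ‖x‖ ^ 2 = ∑ i, c i ^ 2 ∧
      ‖WithLp.toLp 2 (A *ᵥ x)‖ ^ 2 = ∑ i : I, svals A i ^ 2 * c i ^ 2 := by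
  obtain ⟨c, rfl⟩ := (Submodule.mem_span_range_iff_exists_fun ℝ).mp hx
  have hon : Orthonormal ℝ fun i : I => rightSingularBasis A i :=
    (rightSingularBasis A).orthonormal.comp _ Subtype.val_injective
  refine ⟨c, ?_, ?_⟩
  · rw [← real_inner_self_eq_norm_sq, hon.inner_sum]
    simp [sq]
  · rw [← real_inner_self_eq_norm_sq, EuclideanSpace.inner_eq_star_dotProduct, star_trivial]
    simp only [WithLp.ofLp_sum, WithLp.ofLp_smul, Matrix.mulVec_sum,
      Matrix.mulVec_smul, dotProduct_sum, sum_dotProduct, smul_dotProduct, dotProduct_smul,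
      mulVec_dotProduct_mulVec_rightSingularBasis, ← Subtype.ext_iff, smul_eq_mul, mul_ite,
      mul_zero, Finset.sum_ite_eq', Finset.mem_univ, if_true]
    exact Finset.sum_congr rfl fun i _ => by ring

end SingularValueDecomposition

section SecondOrderQuotient

variable {E : Type*} [AddCommGroup E] [Module ℝ E]

def secondDiffQuot (x w : E) (t : ℝ) (c : E) : E := (2 / t ^ 2) • (c - x - t • w)

variable {x w : E} {t : ℝ}

lemma secondDiffQuot_add_smul_add_smul (ht : t ≠ 0) (v : E) :
    secondDiffQuot x w t (x + t • w + (t ^ 2 / 2) • v) = v := by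
  rw [secondDiffQuot, add_assoc, add_sub_cancel_left, add_sub_cancel_left, smul_smul,
    div_mul_div_cancel₀ (pow_ne_zero 2 ht), div_self two_ne_zero, one_smul]

lemma add_smul_add_smul_secondDiffQuot (ht : t ≠ 0) (c : E) :
    x + t • w + (t ^ 2 / 2) • secondDiffQuot x w t c = c := by
  rw [secondDiffQuot, smul_smul, div_mul_div_cancel₀ two_ne_zero,
    div_self (pow_ne_zero 2 ht), one_smul]
  abel

lemma secondDiffQuot_sub_secondDiffQuot (c c' : E) :
    secondDiffQuot x w t c - secondDiffQuot x w t c' = (2 / t ^ 2) • (c - c') := by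
  rw [secondDiffQuot, secondDiffQuot, ← smul_sub]
  abel_nf

lemma inv_smul_sub_eq_add_smul_secondDiffQuot (ht : t ≠ 0) (c : E) :
    t⁻¹ • (c - x) = w + (t / 2) • secondDiffQuot x w t c := by
  rw [secondDiffQuot, smul_smul, show t / 2 * (2 / t ^ 2) = t⁻¹ by field_simp,
    smul_sub t⁻¹ (c - x), smul_smul, inv_mul_cancel₀ ht, one_smul, add_sub_cancel]

lemma mem_tangentCone2Of_iff [TopologicalSpace E] {C : Set E} {u : E} :
    u ∈ tangentCone2Of C x w ↔ ∃ t : ℕ → ℝ, ∃ c : ℕ → E, (∀ k, 0 < t k) ∧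
      Tendsto t atTop (𝓝 0) ∧ (∀ k, c k ∈ C) ∧
      Tendsto (fun k => secondDiffQuot x w (t k) (c k)) atTop (𝓝 u) := by
  constructor
  · rintro ⟨t, u', ht0, ht, hu', hC⟩
    refine ⟨t, _, ht0, ht, hC, ?_⟩
    simpa only [secondDiffQuot_add_smul_add_smul (ht0 _).ne'] using hu'
  · rintro ⟨t, c, ht0, ht, hC, hc⟩
    refine ⟨t, _, ht0, ht, hc, fun k => ?_⟩
    rw [add_smul_add_smul_secondDiffQuot (ht0 k).ne']
    exact hC k

lemma tendsto_inv_smul_sub_of_tendsto_secondDiffQuot [TopologicalSpace E]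
    [IsTopologicalAddGroup E] [ContinuousSMul ℝ E] {ξ : ℝ → E} {u : E}
    (h : Tendsto (fun t => secondDiffQuot x w t (ξ t)) (𝓝[>] 0) (𝓝 u)) :
    Tendsto (fun t => t⁻¹ • (ξ t - x)) (𝓝[>] 0) (𝓝 w) := by
  have hhalf : Tendsto (fun t : ℝ => t / 2) (𝓝[>] 0) (𝓝 0) := by
    simpa using (tendsto_id.div_const (2 : ℝ)).mono_left (nhdsWithin_le_nhds (a := (0 : ℝ)))
  have := tendsto_const_nhds (x := w) |>.add (hhalf.smul h)
  rw [zero_smul, add_zero] at this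
  refine this.congr' ?_
  filter_upwards [self_mem_nhdsWithin] with t ht
  exact (inv_smul_sub_eq_add_smul_secondDiffQuot (ne_of_gt ht) _).symm

end SecondOrderQuotient

section MatrixDiagonal

variable {m n : ℕ}

lemma mdiag_zero : (mdiag 0 : Mat m n) = 0 := by
  ext; simp [mdiag]

lemma mdiag_sub (y z : Fin n → ℝ) : (mdiag (y - z) : Mat m n) = mdiag y - mdiag z := by
  ext i j; by_cases h : (i : ℕ) = j <;> simp [mdiag, h]

lemma mdiag_smul (c : ℝ) (y : Fin n → ℝ) : (mdiag (c • y) : Mat m n) = c • mdiag y := by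
  ext i j; by_cases h : (i : ℕ) = j <;> simp [mdiag, h]

lemma continuous_mdiag : Continuous (mdiag : (Fin n → ℝ) → Mat m n) :=
  continuous_pi fun i => continuous_pi fun j => by
    by_cases h : (i : ℕ) = j <;> simp [mdiag, h, continuous_apply, continuous_const]

end MatrixDiagonal

section Frobenius

attribute [local instance] Matrix.frobeniusNormedAddCommGroup Matrix.frobeniusNormedSpace

variable {m n : ℕ}

lemma frobenius_norm_sq_eq_trace {p q : ℕ} (A : Matrix (Fin p) (Fin q) ℝ) :
    ‖A‖ ^ 2 = trace (Aᵀ * A) := by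
  have hnn : 0 ≤ ∑ i, ∑ j, ‖A i j‖ ^ (2 : ℝ) := by positivity
  rw [Matrix.frobenius_norm_def, ← Real.sqrt_eq_rpow, Real.sq_sqrt hnn, Finset.sum_comm]
  simp [Matrix.trace, Matrix.mul_apply, sq]

lemma frobenius_norm_orthogonal_conj {U : Matrix (Fin m) (Fin m) ℝ}
    {V : Matrix (Fin n) (Fin n) ℝ} (hU : Uᵀ * U = 1) (hV : Vᵀ * V = 1) (M : Mat m n) :
    ‖U * M * Vᵀ‖ = ‖M‖ := by
  refine (sq_eq_sq₀ (norm_nonneg _) (norm_nonneg _)).mp ?_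
  rw [frobenius_norm_sq_eq_trace, frobenius_norm_sq_eq_trace]
  simp only [Matrix.transpose_mul, Matrix.transpose_transpose, Matrix.mul_assoc]
  rw [← Matrix.mul_assoc Uᵀ, hU, Matrix.one_mul, Matrix.trace_mul_comm, Matrix.mul_assoc,
    Matrix.mul_assoc, hV, Matrix.mul_one]

lemma norm_mulVec_le_frobenius {p q : ℕ} (M : Matrix (Fin p) (Fin q) ℝ) (x : Fin q → ℝ) :
    ‖WithLp.toLp 2 (M *ᵥ x)‖ ≤ ‖M‖ * ‖WithLp.toLp 2 x‖ := by
  rw [← Matrix.frobenius_norm_replicateCol (ι := Unit),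
    ← Matrix.frobenius_norm_replicateCol (ι := Unit), Matrix.replicateCol_mulVec]
  exact Matrix.frobenius_norm_mul _ _

lemma svals_le_svals_add_norm_sub (A B : Mat m n) (s : Fin n) :
    svals B s ≤ svals A s + ‖B - A‖ := by
  have hrank : ∀ (X : Mat m n) (I : Finset (Fin n)), Module.finrank ℝ
      (Submodule.span ℝ (Set.range fun i : I => rightSingularBasis X i)) = I.card := by
    intro X I
    exact (finrank_span_eq_card
      ((rightSingularBasis X).orthonormal.comp _ Subtype.val_injective).linearIndependent).trans
      (Fintype.card_coe I)
  -- Courant–Fischer: test on a nonzero `x ∈ span {wᴬᵢ | s ≤ i} ⊓ span {wᴮᵢ | i ≤ s}`.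
  obtain ⟨x, ⟨hxA, hxB⟩, hx0⟩ := Submodule.exists_mem_inf_ne_zero_of_finrank_lt_add
    (Submodule.span ℝ (Set.range fun i : Finset.Ici s => rightSingularBasis A i))
    (Submodule.span ℝ (Set.range fun i : Finset.Iic s => rightSingularBasis B i))
    (by rw [hrank, hrank, Fin.card_Ici, Fin.card_Iic, finrank_euclideanSpace_fin]; omega)
  obtain ⟨a, hxa, hAx⟩ := norm_mulVec_sq_of_mem_span A _ hxA
  obtain ⟨b, hxb, hBx⟩ := norm_mulVec_sq_of_mem_span B _ hxB
  have hA : ‖WithLp.toLp 2 (A *ᵥ x)‖ ≤ svals A s * ‖x‖ := by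
    refine le_of_pow_le_pow_left₀ two_ne_zero
      (mul_nonneg (svals_nonneg _ _) (norm_nonneg _)) ?_
    rw [hAx, mul_pow, hxa, Finset.mul_sum]
    gcongr with i
    exacts [svals_nonneg _ _, svals_antitone A (Finset.mem_Ici.mp i.2)]
  have hB : svals B s * ‖x‖ ≤ ‖WithLp.toLp 2 (B *ᵥ x)‖ := by
    refine le_of_pow_le_pow_left₀ two_ne_zero (norm_nonneg _) ?_
    rw [hBx, mul_pow, hxb, Finset.mul_sum]
    gcongr with i
    exacts [svals_nonneg _ _, svals_antitone B (Finset.mem_Iic.mp i.2)]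
  have hBA : ‖WithLp.toLp 2 (B *ᵥ x)‖ ≤ ‖WithLp.toLp 2 (A *ᵥ x)‖ + ‖B - A‖ * ‖x‖ := by
    calc ‖WithLp.toLp 2 (B *ᵥ x)‖
        = ‖WithLp.toLp 2 (A *ᵥ x) + WithLp.toLp 2 ((B - A) *ᵥ x)‖ := by
          rw [Matrix.sub_mulVec, ← WithLp.toLp_add, add_sub_cancel]
      _ ≤ ‖WithLp.toLp 2 (A *ᵥ x)‖ + ‖B - A‖ * ‖WithLp.toLp 2 x.ofLp‖ :=
          (norm_add_le _ _).trans (by gcongr; exact norm_mulVec_le_frobenius _ _)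
      _ = _ := by rw [WithLp.toLp_ofLp]
  have hx : 0 < ‖x‖ := norm_pos_iff.mpr hx0
  nlinarith

lemma abs_svals_sub_svals_le (A B : Mat m n) (s : Fin n) :
    |svals A s - svals B s| ≤ ‖A - B‖ := by
  have h₁ := svals_le_svals_add_norm_sub A B s
  have h₂ := svals_le_svals_add_norm_sub B A s
  rw [norm_sub_rev] at h₁
  exact abs_sub_le_iff.mpr ⟨by linarith, by linarith⟩

variable {Δ : Set (Fin n → ℝ)} {X H : Mat m n} {d : Fin n → ℝ}
  {dds : Mat m n → Fin n → ℝ} {t : ℝ}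

lemma exists_svals_eq_sortDesc_abs_and_norm_sub_eq (hmn : n ≤ m) (A : Mat m n) (y : Fin n → ℝ) :
    ∃ B : Mat m n, svals B = sortDesc (fun i => |y i|) ∧
      ‖B - A‖ = ‖(mdiag (y - svals A) : Mat m n)‖ := by
  obtain ⟨U, V, hU, hV, hA⟩ := exists_svd hmn A
  refine ⟨U * (mdiag y : Mat m n) * Vᵀ, svals_orthogonal_conj_mdiag hmn hU hV y, ?_⟩
  rw [mdiag_sub, ← frobenius_norm_orthogonal_conj hU hV (mdiag y - _), Matrix.mul_sub,
    Matrix.sub_mul, ← hA]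

lemma norm_secondDiffQuot_sub_eq (ht : t ≠ 0) {W B : Mat m n} {y : Fin n → ℝ}
    (hB : ‖B - (X + t • H + (t ^ 2 / 2) • W)‖ =
      ‖(mdiag (y - svals (X + t • H + (t ^ 2 / 2) • W)) : Mat m n)‖) :
    ‖secondDiffQuot X H t B - W‖ = ‖(mdiag (secondDiffQuot (svals X) d t y -
      secondDiffQuot (svals X) d t (svals (X + t • H + (t ^ 2 / 2) • W))) : Mat m n)‖ := by
  conv_lhs => rw [← secondDiffQuot_add_smul_add_smul (x := X) (w := H) ht W]
  rw [secondDiffQuot_sub_secondDiffQuot, secondDiffQuot_sub_secondDiffQuot, mdiag_smul,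
    norm_smul, norm_smul, hB]

lemma norm_secondDiffQuot_svals_sub_le (ht : t ≠ 0) (Y W : Mat m n) :
    ‖secondDiffQuot (svals X) d t (svals Y) -
      secondDiffQuot (svals X) d t (svals (X + t • H + (t ^ 2 / 2) • W))‖ ≤
      ‖secondDiffQuot X H t Y - W‖ := by
  conv_rhs => rw [← secondDiffQuot_add_smul_add_smul (x := X) (w := H) ht W]
  rw [secondDiffQuot_sub_secondDiffQuot, secondDiffQuot_sub_secondDiffQuot, norm_smul, norm_smul]
  gcongr
  refine (pi_norm_le_iff_of_nonneg (norm_nonneg _)).mpr fun s => ?_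
  rw [Pi.sub_apply, Real.norm_eq_abs]
  exact abs_svals_sub_svals_le _ _ s

lemma exists_mem_norm_secondDiffQuot_sub_eq (hmn : n ≤ m) (hΔ : AbsSymSet Δ) (ht : t ≠ 0)
    {y : Fin n → ℝ} (hy : y ∈ Δ) (W : Mat m n) :
    ∃ Y ∈ {Y : Mat m n | svals Y ∈ Δ}, ‖secondDiffQuot X H t Y - W‖ =
      ‖(mdiag (secondDiffQuot (svals X) d t y -
        secondDiffQuot (svals X) d t (svals (X + t • H + (t ^ 2 / 2) • W))) : Mat m n)‖ := by
  obtain ⟨B, hB, hBA⟩ :=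
    exists_svals_eq_sortDesc_abs_and_norm_sub_eq hmn (X + t • H + (t ^ 2 / 2) • W) y
  exact ⟨B, show svals B ∈ Δ from hB ▸ hΔ.sortDesc_abs_mem hy,
    norm_secondDiffQuot_sub_eq ht hBA⟩

variable (hdds : ∀ W, Tendsto (fun t => secondDiffQuot (svals X) d t
  (svals (X + t • H + (t ^ 2 / 2) • W))) (𝓝[>] 0) (𝓝 (dds W)))
include hdds

lemma mem_tangentCone2Of_of_mem_tangentCone2Of_svals {W : Mat m n}
    (hW : W ∈ tangentCone2Of {Y : Mat m n | svals Y ∈ Δ} X H) :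
    dds W ∈ tangentCone2Of Δ (svals X) d := by
  obtain ⟨t, Y, ht0, ht, hY, hlim⟩ := mem_tangentCone2Of_iff.mp hW
  refine mem_tangentCone2Of_iff.mpr ⟨t, fun k => svals (Y k), ht0, ht, hY, ?_⟩
  refine ((hdds W).comp (tendsto_nhdsWithin_iff.mpr ⟨ht, .of_forall ht0⟩)).congr_dist ?_
  refine squeeze_zero (fun _ => dist_nonneg) (fun k => ?_)
    (tendsto_iff_norm_sub_tendsto_zero.mp hlim)
  rw [dist_comm, dist_eq_norm]
  exact norm_secondDiffQuot_svals_sub_le (ht0 k).ne' _ _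

lemma mem_tangentCone2Of_svals_of_mem_tangentCone2Of (hmn : n ≤ m) (hΔ : AbsSymSet Δ)
    {W : Mat m n} (hW : dds W ∈ tangentCone2Of Δ (svals X) d) :
    W ∈ tangentCone2Of {Y : Mat m n | svals Y ∈ Δ} X H := by
  obtain ⟨t, c, ht0, ht, hc, hlim⟩ := mem_tangentCone2Of_iff.mp hW
  choose Y hY hYW using fun k =>
    exists_mem_norm_secondDiffQuot_sub_eq (X := X) (H := H) (d := d) hmn hΔ (ht0 k).ne' (hc k) W
  refine mem_tangentCone2Of_iff.mpr ⟨t, Y, ht0, ht, hY, tendsto_iff_norm_sub_tendsto_zero.mpr ?_⟩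
  have := ((continuous_mdiag (m := m)).tendsto _).comp
    (hlim.sub ((hdds W).comp (tendsto_nhdsWithin_iff.mpr ⟨ht, .of_forall ht0⟩)))
  rw [sub_self, mdiag_zero] at this
  simpa only [Function.comp_def, hYW, norm_zero] using this.norm

lemma nonempty_tangentCone2Of_svals (hmn : n ≤ m) (hΔ : AbsSymSet Δ)
    (hne : (tangentCone2Of Δ (svals X) d).Nonempty) :
    (tangentCone2Of {Y : Mat m n | svals Y ∈ Δ} X H).Nonempty := by
  obtain ⟨u, hu⟩ := hne
  obtain ⟨t, c, ht0, ht, hc, hlim⟩ := mem_tangentCone2Of_iff.mp hu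
  choose Y hY hYW using fun k =>
    exists_mem_norm_secondDiffQuot_sub_eq (X := X) (H := H) (d := d) hmn hΔ (ht0 k).ne' (hc k) 0
  have hbdd : Bornology.IsBounded (Set.range fun k => secondDiffQuot X H (t k) (Y k)) := by
    have hconv := (((continuous_mdiag (m := m)).tendsto _).comp
      (hlim.sub ((hdds 0).comp (tendsto_nhdsWithin_iff.mpr ⟨ht, .of_forall ht0⟩)))).norm
    simp only [Function.comp_def, ← hYW, sub_zero] at hconv
    obtain ⟨C, hC⟩ := hconv.bddAbove_range
    exact isBounded_iff_forall_norm_le.mpr ⟨C, by rintro _ ⟨k, rfl⟩; exact hC ⟨k, rfl⟩⟩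
  obtain ⟨W, -, φ, hφ, hW⟩ := tendsto_subseq_of_bounded hbdd fun k => ⟨k, rfl⟩
  exact ⟨W, mem_tangentCone2Of_iff.mpr
    ⟨t ∘ φ, Y ∘ φ, fun k => ht0 _, ht.comp hφ.tendsto_atTop, fun k => hY _, hW⟩⟩

lemma exists_arc_svals (hmn : n ≤ m) (hΔ : AbsSymSet Δ) {W : Mat m n} {ε : ℝ}
    {ζ : ℝ → Fin n → ℝ} (hζΔ : ∀ t ∈ Set.Icc 0 ε, ζ t ∈ Δ) (hζ0 : ζ 0 = svals X)
    (hζ : Tendsto (fun t => secondDiffQuot (svals X) d t (ζ t)) (𝓝[>] 0) (𝓝 (dds W))) :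
    ∃ ξ : ℝ → Mat m n, (∀ t ∈ Set.Icc 0 ε, ξ t ∈ {Y : Mat m n | svals Y ∈ Δ}) ∧ ξ 0 = X ∧
      Tendsto (fun t => t⁻¹ • (ξ t - X)) (𝓝[>] 0) (𝓝 H) ∧
      Tendsto (fun t => secondDiffQuot X H t (ξ t)) (𝓝[>] 0) (𝓝 W) := by
  choose ξ hξ hξA using fun t =>
    exists_svals_eq_sortDesc_abs_and_norm_sub_eq hmn (X + t • H + (t ^ 2 / 2) • W) (ζ t)
  have h2 : Tendsto (fun t => secondDiffQuot X H t (ξ t)) (𝓝[>] 0) (𝓝 W) := by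
    refine tendsto_iff_norm_sub_tendsto_zero.mpr ?_
    have := ((continuous_mdiag (m := m)).tendsto _).comp (hζ.sub (hdds W))
    rw [sub_self, mdiag_zero] at this
    refine (norm_zero (E := Mat m n) ▸ this.norm).congr' ?_
    filter_upwards [self_mem_nhdsWithin] with t ht
    exact (norm_secondDiffQuot_sub_eq (ne_of_gt ht) (hξA t)).symm
  refine ⟨ξ, fun t ht => ?_, ?_, tendsto_inv_smul_sub_of_tendsto_secondDiffQuot h2, h2⟩
  · change svals (ξ t) ∈ Δ
    rw [hξ]
    exact hΔ.sortDesc_abs_mem (hζΔ t ht)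
  · have h0 := hξA 0
    simp only [zero_smul, add_zero, hζ0, sub_self, mdiag_zero, norm_zero, ne_eq,
      OfNat.ofNat_ne_zero, not_false_eq_true, zero_pow, zero_div] at h0
    exact sub_eq_zero.mp (norm_eq_zero.mp h0)

theorem tangentCone2Of_svals_preimage (hmn : n ≤ m) (hΔ : AbsSymSet Δ) :
    tangentCone2Of {Y : Mat m n | svals Y ∈ Δ} X H =
      {W | dds W ∈ tangentCone2Of Δ (svals X) d} :=
  Set.ext fun _ => ⟨mem_tangentCone2Of_of_mem_tangentCone2Of_svals hdds,
    mem_tangentCone2Of_svals_of_mem_tangentCone2Of hdds hmn hΔ⟩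

theorem ParabolicallyDerivable.svals_preimage (hmn : n ≤ m) (hΔ : AbsSymSet Δ)
    (hPD : ParabolicallyDerivable Δ (svals X) d) :
    ParabolicallyDerivable {Y : Mat m n | svals Y ∈ Δ} X H := by
  refine ⟨nonempty_tangentCone2Of_svals hdds hmn hΔ hPD.1, fun W hW => ?_⟩
  obtain ⟨ε, hε, ζ, hζΔ, hζ0, -, hζ⟩ :=
    hPD.2 _ (mem_tangentCone2Of_of_mem_tangentCone2Of_svals hdds hW)
  exact ⟨ε, hε, exists_arc_svals hdds hmn hΔ hζΔ hζ0 hζ⟩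

end Frobenius

end Paper

theorem stmt9_general {m n : ℕ} (hmn : n ≤ m) (Δ : Set (Fin n → ℝ)) (hΔ : AbsSymSet Δ)
    (X : Mat m n)
    (ds : Mat m n → Fin n → ℝ) (dds : Mat m n → Mat m n → Fin n → ℝ)
    (hdds : ∀ H W s, Tendsto (fun t : ℝ =>
        (svals (X + t • H + (t ^ 2 / 2) • W) s - svals X s - t * ds H s) / (t ^ 2 / 2))
      (𝓝[>] (0 : ℝ)) (𝓝 (dds H W s)))
    (H : Mat m n) :
    tangentCone2Of {Y : Mat m n | svals Y ∈ Δ} X H =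
      {W : Mat m n | dds H W ∈ tangentCone2Of Δ (svals X) (ds H)} ∧
    (ParabolicallyDerivable Δ (svals X) (ds H) →
      ParabolicallyDerivable {Y : Mat m n | svals Y ∈ Δ} X H) := by
  have hq : ∀ W, Tendsto (fun t => secondDiffQuot (svals X) (ds H) t
      (svals (X + t • H + (t ^ 2 / 2) • W))) (𝓝[>] 0) (𝓝 (dds H W)) := fun W =>
    tendsto_pi_nhds.mpr fun s => (hdds H W s).congr fun t => by
      simp only [secondDiffQuot, Pi.smul_apply, Pi.sub_apply, smul_eq_mul]
      ring
  exact ⟨tangentCone2Of_svals_preimage hq hmn hΔ, ParabolicallyDerivable.svals_preimage hq hmn hΔ⟩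

/-- Second-order tangent sets of orthogonally invariant matrix sets:
`T²_Γ(X,H) = {W : σ''(X;H,W) ∈ T²_Δ(σ(X), σ'(X;H))}`, and parabolic derivability
of `Δ` at `σ(X)` for `σ'(X;H)` implies that of `Γ` at `X` for `H`. -/
theorem stmt9 {m n : ℕ} (hmn : n ≤ m) (Δ : Set (Fin n → ℝ)) (hΔ : AbsSymSet Δ)
    (X : Mat m n) (hX : svals X ∈ Δ)
    (ds : Mat m n → Fin n → ℝ) (dds : Mat m n → Mat m n → Fin n → ℝ)
    (hds : ∀ H s, Tendsto (fun t : ℝ => (svals (X + t • H) s - svals X s) / t)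
      (𝓝[>] (0 : ℝ)) (𝓝 (ds H s)))
    (hdds : ∀ H W s, Tendsto (fun t : ℝ =>
        (svals (X + t • H + (t ^ 2 / 2) • W) s - svals X s - t * ds H s) / (t ^ 2 / 2))
      (𝓝[>] (0 : ℝ)) (𝓝 (dds H W s)))
    (H : Mat m n) (hH : H ∈ tangentConeOf {Y : Mat m n | svals Y ∈ Δ} X) :
    tangentCone2Of {Y : Mat m n | svals Y ∈ Δ} X H =
      {W : Mat m n | dds H W ∈ tangentCone2Of Δ (svals X) (ds H)} ∧
    (ParabolicallyDerivable Δ (svals X) (ds H) →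
      ParabolicallyDerivable {Y : Mat m n | svals Y ∈ Δ} X H) :=
  stmt9_general hmn Δ hΔ X ds dds hdds H
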